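/- arXiv:1011.1172 — 3 statements merged into one kernel-verified Lean document; each statement's English description precedes it below -/
import Mathlib

section
/- History-preserving bisimilarity and TLμ-equivalence are incomparable: there exist finite systems 𝔗₁, 𝔗₂ with 𝔗₁ ∼_hpb 𝔗₂ but 𝔗₁ ≁_{TLμ} 𝔗₂ (distinguished by the TLμ formula ⟨⊗⟩(⟨a⟩⟨c⟩tt ∧ ⟨b⟩⟨d⟩tt)), and there exist finite systems 𝔗₃, 𝔗₄ with 𝔗₃ ∼_{TLμ} 𝔗₄ but 𝔗₃ ≁_hpb 𝔗₄. Hence neither ∼_hpb ⊆ ∼_{TLμ} nor ∼_{TLμ} ⊆ ∼_hpb. -/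
namespace TC

/-- A labelled transition: source state, label, target state. -/
structure Tr (S L : Type) where
  src : S
  lbl : L
  tgt : S

/-- A system (pre-TSI): initial state, set of transitions, independence relation. -/
structure Sys (S L : Type) where
  init : S
  T : Set (Tr S L)
  I : Tr S L → Tr S L → Prop

/-- Processes of the stateless maximal process space: a support set together
with a transition of `𝔄 = T ∪ {t_ε}` (`none` is the empty transition `t_ε`). -/
abbrev Proc (S L : Type) := Set (Tr S L) × Option (Tr S L)

namespace Sys

variable {S L : Type} (𝔗 : Sys S L)

/-- `≺` : two transitions are instances of the same action in two different interleavings. -/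
def Prec (t u : Tr S L) : Prop :=
  t.lbl = u.lbl ∧ ∃ b, 𝔗.I t ⟨t.src, b, u.src⟩ ∧ 𝔗.I t ⟨t.tgt, b, u.tgt⟩ ∧
    𝔗.I ⟨t.src, b, u.src⟩ u

/-- `∼` : the least equivalence relation containing `≺`. -/
def Sim : Tr S L → Tr S L → Prop := Relation.EqvGen 𝔗.Prec

/-- `t ⊗ t'` : immediately concurrent transitions. -/
def Conc (t t' : Tr S L) : Prop := t.src = t'.src ∧ 𝔗.I t t'

/-- `t # t'` : transitions in conflict. -/
def Confl (t t' : Tr S L) : Prop := t.src = t'.src ∧ ¬ 𝔗.I t t'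

/-- `t ⊖ t'` : linearly concurrent transitions. -/
def Lin (t t' : Tr S L) : Prop := t.tgt = t'.src ∧ 𝔗.I t t'

/-- `t ≤ t'` : causally dependent transitions. -/
def Caus (t t' : Tr S L) : Prop := t.tgt = t'.src ∧ ¬ 𝔗.I t t'

/-- `≤` lifted to `𝔄 = T ∪ {t_ε}`: the empty transition `t_ε` (i.e. `none`)
satisfies `t_ε ≤ r` for every transition `r` with source `s₀`. -/
def CausA : Option (Tr S L) → Tr S L → Prop
  | none, r => r.src = 𝔗.init
  | some t, r => 𝔗.Caus t r

/-- `⊖` lifted to `𝔄 = T ∪ {t_ε}`. -/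
def LinA : Option (Tr S L) → Tr S L → Prop
  | none, _ => False
  | some t, r => 𝔗.Lin t r

/-- `𝔛(s)` : the maximal set of transitions at state `s`. -/
def maxSet (s : S) : Set (Tr S L) := {t | t ∈ 𝔗.T ∧ t.src = s}

/-- A conflict-free set of transitions: all with the same source and pairwise
immediately concurrent. -/
def ConflictFree (P : Set (Tr S L)) : Prop :=
  P ⊆ 𝔗.T ∧ (∃ s, ∀ t ∈ P, Tr.src t = s) ∧
    ∀ t ∈ P, ∀ t' ∈ P, t ≠ t' → 𝔗.Conc t t'

/-- A support set: a maximal set or a non-empty conflict-free set. -/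
def IsSupport (R : Set (Tr S L)) : Prop :=
  (∃ s, R = 𝔗.maxSet s) ∨ (R.Nonempty ∧ 𝔗.ConflictFree R)

/-- `M ⊑ R` : `M` is a complete trace of `R`, i.e. a conflict-free support set
`M ⊆ R` that cannot be enlarged inside `R` by a transition concurrent with all of `M`. -/
def CompleteTrace (M R : Set (Tr S L)) : Prop :=
  𝔗.IsSupport M ∧ 𝔗.ConflictFree M ∧ M ⊆ R ∧
    ¬ ∃ t ∈ R \ M, ∀ t' ∈ M, 𝔗.Conc t t'

/-- `𝒳` : the set of maximal sets and maximal traces of `𝔗`. -/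
def calX : Set (Set (Tr S L)) :=
  {R | (∃ s, R = 𝔗.maxSet s) ∨ ∃ s, 𝔗.CompleteTrace R (𝔗.maxSet s)}

/-- Membership in `𝔄 = T ∪ {t_ε}`. -/
def memA : Option (Tr S L) → Prop
  | none => True
  | some t => t ∈ 𝔗.T

/-- The stateless maximal process space `𝔖 = 𝒳 × 𝔄`. -/
def Sspace : Set (Proc S L) := {p | p.1 ∈ 𝔗.calX ∧ 𝔗.memA p.2}

/-- The initial process `(𝔛(s₀), t_ε)`. -/
def initProc : Proc S L := (𝔗.maxSet 𝔗.init, none)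

/-- The axioms making a system a transition system with independence. -/
structure IsTSI : Prop where
  I_dom : ∀ ⦃t t'⦄, 𝔗.I t t' → t ∈ 𝔗.T ∧ t' ∈ 𝔗.T
  I_irrefl : ∀ t, ¬ 𝔗.I t t
  I_symm : ∀ ⦃t t'⦄, 𝔗.I t t' → 𝔗.I t' t
  A1 : ∀ ⦃t u⦄, 𝔗.Sim t u → t.src = u.src → t.lbl = u.lbl → t.tgt = u.tgt
  A2 : ∀ ⦃t u⦄, 𝔗.I t u → t.src = u.src →
        ∃ q, 𝔗.I t ⟨t.tgt, u.lbl, q⟩ ∧ 𝔗.I u ⟨u.tgt, t.lbl, q⟩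
  A3 : ∀ ⦃t u⦄, 𝔗.I t u → t.tgt = u.src →
        ∃ s₂, 𝔗.I t ⟨t.src, u.lbl, s₂⟩ ∧ 𝔗.I ⟨t.src, u.lbl, s₂⟩ ⟨s₂, t.lbl, u.tgt⟩
  A4 : ∀ ⦃t t₂⦄, 𝔗.Sim t t₂ → ∀ t', (𝔗.I t t' ↔ 𝔗.I t₂ t')

/-- Image-finiteness (finite branching). -/
def ImageFinite : Prop := ∀ s a, {t | t ∈ 𝔗.T ∧ t.src = s ∧ t.lbl = a}.Finite

/-- No auto-concurrency: independent transitions enabled at the same state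
never carry the same label. -/
def NoAutoConc : Prop :=
  ∀ ⦃t t'⦄, t ∈ 𝔗.T → t' ∈ 𝔗.T → 𝔗.Conc t t' → t.lbl ≠ t'.lbl

end Sys

end TC
namespace TC

namespace Sys

variable {S L : Type} (𝔗 : Sys S L)

/-- A sequence of composable transitions of `𝔗` from state `s`. -/
def IsRunFrom : S → List (Tr S L) → Prop
  | _, [] => True
  | s, t :: ts => t ∈ 𝔗.T ∧ t.src = s ∧ IsRunFrom t.tgt ts

/-- A run of `𝔗`: a finite sequence of composable transitions from `s₀`. -/
def IsRun (π : List (Tr S L)) : Prop := 𝔗.IsRunFrom 𝔗.init π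

/-- The state reached after executing a run (the target of `ϱ(π)`,
or `s₀` for the empty run). -/
def endState (π : List (Tr S L)) : S :=
  match π.getLast? with
  | none => 𝔗.init
  | some t => t.tgt

/-- The last transition of the run is independent of `u`
(false for the empty run). -/
def lastIndep (π : List (Tr S L)) (u : Tr S L) : Prop :=
  ∃ t, π.getLast? = some t ∧ 𝔗.I t u

/-- The causal dependency order on the event occurrences (positions) of a run,
induced by the independence relation: the reflexive-transitive closure of
"occurs earlier and is not independent". -/
def runOrder (π : List (Tr S L)) : Fin π.length → Fin π.length → Prop :=
  Relation.ReflTransGen (fun i j => i < j ∧ ¬ 𝔗.I (π.get i) (π.get j))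

end Sys

/-- The (labelled) posets induced by two runs with the respective independence
relations are isomorphic. -/
def PosetIso {S₁ S₂ L : Type} (𝔗₁ : Sys S₁ L) (𝔗₂ : Sys S₂ L)
    (π₁ : List (Tr S₁ L)) (π₂ : List (Tr S₂ L)) : Prop :=
  ∃ f : Fin π₁.length ≃ Fin π₂.length,
    (∀ i, (π₁.get i).lbl = (π₂.get (f i)).lbl) ∧
    ∀ i j, 𝔗₁.runOrder π₁ i j ↔ 𝔗₂.runOrder π₂ (f i) (f j)

/-- The pair of extended runs `(π₁·u, π₂·v)` is synchronous. -/
def SyncExt {S₁ S₂ L : Type} (𝔗₁ : Sys S₁ L) (𝔗₂ : Sys S₂ L)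
    (π₁ : List (Tr S₁ L)) (π₂ : List (Tr S₂ L)) (u : Tr S₁ L) (v : Tr S₂ L) : Prop :=
  (𝔗₁.lastIndep π₁ u ↔ 𝔗₂.lastIndep π₂ v) ∧
    PosetIso 𝔗₁ 𝔗₂ (π₁ ++ [u]) (π₂ ++ [v])

/-- A history-preserving (hp) bisimulation between `𝔗₁` and `𝔗₂`: a relation
on pairs of runs containing `(ε, ε)` such that any labelled extension of one
run is matched by an equally-labelled extension of the other keeping the pair
synchronous. -/
structure IsHPB {S₁ S₂ L : Type} (𝔗₁ : Sys S₁ L) (𝔗₂ : Sys S₂ L)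
    (R : List (Tr S₁ L) → List (Tr S₂ L) → Prop) : Prop where
  base : R [] []
  runs : ∀ ⦃π₁ π₂⦄, R π₁ π₂ → 𝔗₁.IsRun π₁ ∧ 𝔗₂.IsRun π₂
  fwd : ∀ ⦃π₁ π₂⦄, R π₁ π₂ → ∀ ⦃u⦄, u ∈ 𝔗₁.T → u.src = 𝔗₁.endState π₁ →
      ∃ v, v ∈ 𝔗₂.T ∧ v.src = 𝔗₂.endState π₂ ∧ v.lbl = u.lbl ∧
        SyncExt 𝔗₁ 𝔗₂ π₁ π₂ u v ∧ R (π₁ ++ [u]) (π₂ ++ [v])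
  bwd : ∀ ⦃π₁ π₂⦄, R π₁ π₂ → ∀ ⦃v⦄, v ∈ 𝔗₂.T → v.src = 𝔗₂.endState π₂ →
      ∃ u, u ∈ 𝔗₁.T ∧ u.src = 𝔗₁.endState π₁ ∧ u.lbl = v.lbl ∧
        SyncExt 𝔗₁ 𝔗₂ π₁ π₂ u v ∧ R (π₁ ++ [u]) (π₂ ++ [v])

/-- History-preserving bisimilarity `∼_hpb`. -/
def HPBisimilar {S₁ S₂ L : Type} (𝔗₁ : Sys S₁ L) (𝔗₂ : Sys S₂ L) : Prop :=
  ∃ R, IsHPB 𝔗₁ 𝔗₂ R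

/-- Locally synchronous pairs of runs: `(ε,ε)` is locally synchronous, and
`(π₀·u, π₁·v)` is locally synchronous iff `(π₀,π₁)` is and
`(ϱ(π₀),u) ∈ I₀ ⟺ (ϱ(π₁),v) ∈ I₁`. -/
inductive LocSync {S₁ S₂ L : Type} (𝔗₁ : Sys S₁ L) (𝔗₂ : Sys S₂ L) :
    List (Tr S₁ L) → List (Tr S₂ L) → Prop
  | nil : LocSync 𝔗₁ 𝔗₂ [] []
  | snoc {π₁ π₂ u v} : LocSync 𝔗₁ 𝔗₂ π₁ π₂ →
      (𝔗₁.lastIndep π₁ u ↔ 𝔗₂.lastIndep π₂ v) →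
      LocSync 𝔗₁ 𝔗₂ (π₁ ++ [u]) (π₂ ++ [v])

end TC
namespace TC

/-- Formulae of the trace modal mu-calculus `TLμ` (the fragment of TFL with
the combined modality `⟨a⟩ = ⟨a⟩_c ∨ ⟨a⟩_{nc}` and the `⟨⊗⟩` operator). -/
inductive TLmu (L : Type) where
  | tt : TLmu L
  | var : ℕ → TLmu L
  | neg : TLmu L → TLmu L
  | and : TLmu L → TLmu L → TLmu L
  | dia : L → TLmu L → TLmu L
  | diaOx : TLmu L → TLmu L
  | mu : ℕ → TLmu L → TLmu L

namespace TLmu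

variable {S L : Type}

/-- Denotation of `TLμ` formulae over the stateless maximal process space. -/
def denot (𝔗 : Sys S L) (V : ℕ → Set (Proc S L)) : TLmu L → Set (Proc S L)
  | .tt => 𝔗.Sspace
  | .var n => V n
  | .neg φ => 𝔗.Sspace \ denot 𝔗 V φ
  | .and φ ψ => denot 𝔗 V φ ∩ denot 𝔗 V ψ
  | .dia a φ => {p | p ∈ 𝔗.Sspace ∧ ∃ r ∈ p.1, r.lbl = a ∧
      (𝔗.CausA p.2 r ∨ 𝔗.LinA p.2 r) ∧ (𝔗.maxSet r.tgt, some r) ∈ denot 𝔗 V φ}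
  | .diaOx φ => {p | p ∈ 𝔗.Sspace ∧ ∃ M ∈ 𝔗.calX, 𝔗.CompleteTrace M p.1 ∧
      (M, p.2) ∈ denot 𝔗 V φ}
  | .mu n φ => ⋂₀ {Q | Q ⊆ 𝔗.Sspace ∧ denot 𝔗 (Function.update V n Q) φ ⊆ Q}

/-- Free variables of a `TLμ` formula. -/
def FV : TLmu L → Set ℕ
  | .tt => ∅
  | .var n => {n}
  | .neg φ => FV φ
  | .and φ ψ => FV φ ∪ FV ψ
  | .dia _ φ => FV φ
  | .diaOx φ => FV φ
  | .mu n φ => FV φ \ {n}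

/-- Fixpoint-free `TLμ` formulae. -/
def FpFree : TLmu L → Prop
  | .tt => True
  | .var _ => True
  | .neg φ => FpFree φ
  | .and φ ψ => FpFree φ ∧ FpFree ψ
  | .dia _ φ => FpFree φ
  | .diaOx φ => FpFree φ
  | .mu _ _ => False

end TLmu

/-- `TLμ`-equivalence: the initial processes satisfy the same fixpoint-free
closed `TLμ` formulae. -/
def TLmuEquiv {S₁ S₂ L : Type} (𝔗₁ : Sys S₁ L) (𝔗₂ : Sys S₂ L) : Prop :=
  ∀ φ : TLmu L, φ.FpFree → φ.FV = ∅ →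
    (𝔗₁.initProc ∈ TLmu.denot 𝔗₁ (fun _ => ∅) φ ↔
     𝔗₂.initProc ∈ TLmu.denot 𝔗₂ (fun _ => ∅) φ)

end TC

/-!
`⟨⊗⟩` commits to one maximal trace before the branches below it are explored, while an
hp-bisimulation may choose its matching transition afresh at every step. Take two `a ‖ b`
diamonds from the initial state, with `c` after an `a` and `d` after a `b`. If `c` and `d` hang
off the same diamond, the trace `{a, b}` of that diamond satisfies `⟨a⟩⟨c⟩tt ∧ ⟨b⟩⟨d⟩tt`; if they
hang off different diamonds, the two transitions are in conflict and no trace does. Runs are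
still matched by swapping the diamonds exactly when the run starts with `b`.

Conversely `⟨a⟩` is `⟨a⟩_c ∨ ⟨a⟩_{nc}` and cannot tell a causal step from a concurrent one.
Adding to an `a ‖ b` square a second `b` after `a`, caused by `a`, gives a system that maps onto
the square by a bounded morphism identifying the two conflicting `b`s, hence a `TLμ`-equivalent
one; an hp-bisimulation would have to match the causal `b` with the concurrent one.
-/

namespace TC

instance {S L : Type} [DecidableEq S] [DecidableEq L] : DecidableEq (Tr S L) := fun a b =>
  decidable_of_iff (a.src = b.src ∧ a.lbl = b.lbl ∧ a.tgt = b.tgt) (by cases a; cases b; simp)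

def Tr.map {S S' L : Type} (f : S → S') (t : Tr S L) : Tr S' L := ⟨f t.src, t.lbl, f t.tgt⟩

namespace Sys

variable {S L : Type}

def stateAfter (𝔗 : Sys S L) : Option (Tr S L) → S
  | none => 𝔗.init
  | some t => t.tgt

theorem sim_of_prec (𝔗 : Sys S L) {r : Tr S L → Tr S L → Prop} (hr : Equivalence r)
    (h : ∀ t u, 𝔗.Prec t u → r t u) {t u : Tr S L} (hs : 𝔗.Sim t u) : r t u :=
  hr.eqvGen_iff.1 (Relation.EqvGen.mono h t u hs)

theorem lastIndep_singleton (𝔗 : Sys S L) (t u : Tr S L) : 𝔗.lastIndep [t] u ↔ 𝔗.I t u := by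
  simp [lastIndep]

variable {𝔗 : Sys S L}

theorem causA_or_linA_iff {o : Option (Tr S L)} {r : Tr S L} :
    𝔗.CausA o r ∨ 𝔗.LinA o r ↔ r.src = 𝔗.stateAfter o := by
  cases o with
  | none => simp [CausA, LinA, stateAfter]
  | some t => simp only [CausA, LinA, Caus, Lin, stateAfter, ← and_or_left, em', and_true, eq_comm]

theorem maxSet_mem_calX (s : S) : 𝔗.maxSet s ∈ 𝔗.calX := Or.inl ⟨s, rfl⟩

theorem exists_subset_maxSet_of_mem_calX {R : Set (Tr S L)} (hR : R ∈ 𝔗.calX) :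
    ∃ s, R ⊆ 𝔗.maxSet s := by
  rcases hR with ⟨s, rfl⟩ | ⟨s, h⟩
  exacts [⟨s, subset_rfl⟩, ⟨s, h.2.2.1⟩]

theorem isSupport_of_mem_calX {R : Set (Tr S L)} (hR : R ∈ 𝔗.calX) : 𝔗.IsSupport R := by
  rcases hR with ⟨s, rfl⟩ | ⟨s, h⟩
  exacts [Or.inl ⟨s, rfl⟩, h.1]

theorem CompleteTrace.eq_of_conflictFree {M R : Set (Tr S L)} (h : 𝔗.CompleteTrace M R)
    (hR : 𝔗.ConflictFree R) : M = R := by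
  refine h.2.2.1.antisymm fun t ht => by_contra fun htM => h.2.2.2 ⟨t, ⟨ht, htM⟩, fun t' ht' => ?_⟩
  exact hR.2.2 t ht t' (h.2.2.1 ht') fun h => htM (h ▸ ht')

theorem CompleteTrace.mem_calX {M R : Set (Tr S L)} (h : 𝔗.CompleteTrace M R)
    (hR : R ∈ 𝔗.calX) : M ∈ 𝔗.calX := by
  rcases hR with ⟨s, rfl⟩ | ⟨s, hR⟩
  · exact Or.inr ⟨s, h⟩
  · rw [h.eq_of_conflictFree hR.2.1]
    exact Or.inr ⟨s, hR⟩

theorem completeTrace_maxSet {s : S} {m : List (Tr S L)}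
    (hne : m ≠ []) (hm : ∀ t ∈ m, t ∈ 𝔗.T ∧ t.src = s)
    (hconc : ∀ t ∈ m, ∀ t' ∈ m, t ≠ t' → 𝔗.Conc t t')
    (hmax : ∀ t ∈ 𝔗.T, t.src = s → t ∉ m → ∃ t' ∈ m, ¬ 𝔗.Conc t t') :
    𝔗.CompleteTrace {t | t ∈ m} (𝔗.maxSet s) := by
  have hcf : 𝔗.ConflictFree {t | t ∈ m} :=
    ⟨fun t ht => (hm t ht).1, ⟨s, fun t ht => (hm t ht).2⟩, hconc⟩
  refine ⟨Or.inr ⟨List.exists_mem_of_ne_nil m hne, hcf⟩, hcf, hm, ?_⟩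
  rintro ⟨t, ⟨⟨hT, hs⟩, htm⟩, hall⟩
  obtain ⟨t', ht', hn⟩ := hmax t hT hs htm
  exact hn (hall t' ht')

theorem mem_denot_dia_iff {V : ℕ → Set (Proc S L)} {p : Proc S L} {a : L} {φ : TLmu L}
    (hp : p ∈ 𝔗.Sspace) (hanch : ∀ r ∈ p.1, r.src = 𝔗.stateAfter p.2) :
    p ∈ TLmu.denot 𝔗 V (.dia a φ) ↔
      ∃ r ∈ p.1, r.lbl = a ∧ (𝔗.maxSet r.tgt, some r) ∈ TLmu.denot 𝔗 V φ := by
  simp only [TLmu.denot, Set.mem_ofPred_eq, causA_or_linA_iff, hp, true_and]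
  constructor
  · rintro ⟨r, hr, hl, -, h⟩
    exact ⟨r, hr, hl, h⟩
  · rintro ⟨r, hr, hl, h⟩
    exact ⟨r, hr, hl, hanch r hr, h⟩

theorem maxSet_tgt_mem_denot_dia_tt_iff {V : ℕ → Set (Proc S L)} {r : Tr S L} {c : L}
    (hr : r ∈ 𝔗.T) :
    (𝔗.maxSet r.tgt, some r) ∈ TLmu.denot 𝔗 V (.dia c .tt) ↔ ∃ r' ∈ 𝔗.maxSet r.tgt, r'.lbl = c := by
  rw [mem_denot_dia_iff (p := (𝔗.maxSet r.tgt, some r)) ⟨maxSet_mem_calX _, hr⟩ fun r' hr' => hr'.2]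
  constructor
  · rintro ⟨r', hr', hl, -⟩
    exact ⟨r', hr', hl⟩
  · rintro ⟨r', hr', hl⟩
    exact ⟨r', hr', hl, maxSet_mem_calX _, hr'.1⟩

theorem initProc_mem_denot_diaOx_iff {V : ℕ → Set (Proc S L)} {a b c d : L} :
    𝔗.initProc ∈ TLmu.denot 𝔗 V (.diaOx (.and (.dia a (.dia c .tt)) (.dia b (.dia d .tt)))) ↔
      ∃ M, 𝔗.CompleteTrace M (𝔗.maxSet 𝔗.init) ∧
        (∃ r ∈ M, r.lbl = a ∧ ∃ r' ∈ 𝔗.maxSet r.tgt, r'.lbl = c) ∧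
        (∃ r ∈ M, r.lbl = b ∧ ∃ r' ∈ 𝔗.maxSet r.tgt, r'.lbl = d) := by
  have key : ∀ {M : Set (Tr S L)} {e f : L}, 𝔗.CompleteTrace M (𝔗.maxSet 𝔗.init) →
      ((M, none) ∈ TLmu.denot 𝔗 V (.dia e (.dia f .tt)) ↔
        ∃ r ∈ M, r.lbl = e ∧ ∃ r' ∈ 𝔗.maxSet r.tgt, r'.lbl = f) := by
    intro M e f hM
    rw [mem_denot_dia_iff (p := (M, none)) ⟨Or.inr ⟨_, hM⟩, trivial⟩ fun r hr => (hM.2.2.1 hr).2]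
    exact exists_congr fun r => and_congr_right fun hr =>
      and_congr_right' (maxSet_tgt_mem_denot_dia_tt_iff (hM.2.2.1 hr).1)
  simp only [initProc, TLmu.denot, Set.mem_ofPred_eq, Set.mem_inter_iff]
  constructor
  · rintro ⟨-, M, -, hM, hac, hbd⟩
    exact ⟨M, hM, (key hM).1 hac, (key hM).1 hbd⟩
  · rintro ⟨M, hM, hac, hbd⟩
    exact ⟨⟨maxSet_mem_calX _, trivial⟩, M, Or.inr ⟨_, hM⟩, hM, (key hM).2 hac, (key hM).2 hbd⟩

end Sys

structure IsTLBisim {S₁ S₂ L : Type} (𝔗₁ : Sys S₁ L) (𝔗₂ : Sys S₂ L)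
    (B : Proc S₁ L → Proc S₂ L → Prop) : Prop where
  mem_left : ∀ ⦃p q⦄, B p q → p ∈ 𝔗₁.Sspace
  mem_right : ∀ ⦃p q⦄, B p q → q ∈ 𝔗₂.Sspace
  dia_left : ∀ ⦃p q⦄, B p q → ∀ r ∈ p.1, r.src = 𝔗₁.stateAfter p.2 →
    ∃ r' ∈ q.1, r'.lbl = r.lbl ∧ r'.src = 𝔗₂.stateAfter q.2 ∧
      B (𝔗₁.maxSet r.tgt, some r) (𝔗₂.maxSet r'.tgt, some r')
  dia_right : ∀ ⦃p q⦄, B p q → ∀ r' ∈ q.1, r'.src = 𝔗₂.stateAfter q.2 →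
    ∃ r ∈ p.1, r.lbl = r'.lbl ∧ r.src = 𝔗₁.stateAfter p.2 ∧
      B (𝔗₁.maxSet r.tgt, some r) (𝔗₂.maxSet r'.tgt, some r')
  diaOx_left : ∀ ⦃p q⦄, B p q → ∀ M, 𝔗₁.CompleteTrace M p.1 →
    ∃ M', 𝔗₂.CompleteTrace M' q.1 ∧ B (M, p.2) (M', q.2)
  diaOx_right : ∀ ⦃p q⦄, B p q → ∀ M', 𝔗₂.CompleteTrace M' q.1 →
    ∃ M, 𝔗₁.CompleteTrace M p.1 ∧ B (M, p.2) (M', q.2)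

namespace IsTLBisim

variable {S₁ S₂ L : Type} {𝔗₁ : Sys S₁ L} {𝔗₂ : Sys S₂ L} {B : Proc S₁ L → Proc S₂ L → Prop}

theorem mem_denot_iff (hB : IsTLBisim 𝔗₁ 𝔗₂ B) {V₁ : ℕ → Set (Proc S₁ L)}
    {V₂ : ℕ → Set (Proc S₂ L)} (hV : ∀ n ⦃p q⦄, B p q → (p ∈ V₁ n ↔ q ∈ V₂ n)) :
    ∀ φ : TLmu L, φ.FpFree → ∀ ⦃p q⦄, B p q →
      (p ∈ TLmu.denot 𝔗₁ V₁ φ ↔ q ∈ TLmu.denot 𝔗₂ V₂ φ)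
  | .tt, _, _, _, h => iff_of_true (hB.mem_left h) (hB.mem_right h)
  | .var n, _, _, _, h => hV n h
  | .neg φ, hφ, _, _, h => by
    simp only [TLmu.denot, Set.mem_sdiff, iff_true_intro (hB.mem_left h),
      iff_true_intro (hB.mem_right h), mem_denot_iff hB hV φ hφ h]
  | .and φ ψ, hφψ, _, _, h => and_congr (mem_denot_iff hB hV φ hφψ.1 h)
      (mem_denot_iff hB hV ψ hφψ.2 h)
  | .dia a φ, hφ, p, q, h => by
    simp only [TLmu.denot, Set.mem_ofPred_eq, Sys.causA_or_linA_iff]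
    constructor
    · rintro ⟨-, r, hr, rfl, hsrc, hφr⟩
      obtain ⟨r', hr', hlbl, hsrc', h'⟩ := hB.dia_left h r hr hsrc
      exact ⟨hB.mem_right h, r', hr', hlbl, hsrc', (mem_denot_iff hB hV φ hφ h').1 hφr⟩
    · rintro ⟨-, r', hr', rfl, hsrc', hφr'⟩
      obtain ⟨r, hr, hlbl, hsrc, h'⟩ := hB.dia_right h r' hr' hsrc'
      exact ⟨hB.mem_left h, r, hr, hlbl, hsrc, (mem_denot_iff hB hV φ hφ h').2 hφr'⟩
  | .diaOx φ, hφ, p, q, h => by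
    simp only [TLmu.denot, Set.mem_ofPred_eq]
    constructor
    · rintro ⟨-, M, -, hM, hφM⟩
      obtain ⟨M', hM', h'⟩ := hB.diaOx_left h M hM
      exact ⟨hB.mem_right h, M', hM'.mem_calX (hB.mem_right h).1, hM',
        (mem_denot_iff hB hV φ hφ h').1 hφM⟩
    · rintro ⟨-, M', -, hM', hφM'⟩
      obtain ⟨M, hM, h'⟩ := hB.diaOx_right h M' hM'
      exact ⟨hB.mem_left h, M, hM.mem_calX (hB.mem_left h).1, hM,
        (mem_denot_iff hB hV φ hφ h').2 hφM'⟩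
  | .mu _ _, hφ, _, _, _ => hφ.elim

theorem tlmuEquiv (hB : IsTLBisim 𝔗₁ 𝔗₂ B) (h₀ : B 𝔗₁.initProc 𝔗₂.initProc) :
    TLmuEquiv 𝔗₁ 𝔗₂ := fun φ hφ _ =>
  hB.mem_denot_iff (fun _ _ _ _ => Iff.rfl) φ hφ h₀

end IsTLBisim

structure IsBoundedMorphism {S₁ S₂ L : Type} (𝔗₁ : Sys S₁ L) (𝔗₂ : Sys S₂ L) (f : S₁ → S₂) :
    Prop where
  map_init : f 𝔗₁.init = 𝔗₂.init
  map_mem : ∀ t ∈ 𝔗₁.T, t.map f ∈ 𝔗₂.T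
  exists_lift : ∀ s, ∀ u ∈ 𝔗₂.T, u.src = f s → ∃ t ∈ 𝔗₁.T, t.src = s ∧ t.map f = u
  indep_iff : ∀ t ∈ 𝔗₁.T, ∀ t' ∈ 𝔗₁.T, t.src = t'.src → (𝔗₁.I t t' ↔ 𝔗₂.I (t.map f) (t'.map f))

namespace IsBoundedMorphism

variable {S₁ S₂ L : Type} {𝔗₁ : Sys S₁ L} {𝔗₂ : Sys S₂ L} {f : S₁ → S₂}

theorem image_maxSet (hf : IsBoundedMorphism 𝔗₁ 𝔗₂ f) (s : S₁) :
    Tr.map f '' 𝔗₁.maxSet s = 𝔗₂.maxSet (f s) := by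
  ext u
  constructor
  · rintro ⟨t, ⟨ht, rfl⟩, rfl⟩
    exact ⟨hf.map_mem t ht, rfl⟩
  · rintro ⟨hu, hsrc⟩
    obtain ⟨t, ht, htsrc, rfl⟩ := hf.exists_lift s u hu hsrc
    exact ⟨t, ⟨ht, htsrc⟩, rfl⟩

theorem conc_map_iff (hf : IsBoundedMorphism 𝔗₁ 𝔗₂ f) {s : S₁} {t t' : Tr S₁ L}
    (ht : t ∈ 𝔗₁.maxSet s) (ht' : t' ∈ 𝔗₁.maxSet s) :
    𝔗₂.Conc (t.map f) (t'.map f) ↔ 𝔗₁.Conc t t' := by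
  have hsrc : t.src = t'.src := ht.2.trans ht'.2.symm
  exact and_congr (iff_of_true (congrArg f hsrc) hsrc) (hf.indep_iff t ht.1 t' ht'.1 hsrc).symm

theorem conflictFree_image (hf : IsBoundedMorphism 𝔗₁ 𝔗₂ f) {s : S₁} {M : Set (Tr S₁ L)}
    (hM : M ⊆ 𝔗₁.maxSet s) (hcf : 𝔗₁.ConflictFree M) : 𝔗₂.ConflictFree (Tr.map f '' M) := by
  refine ⟨?_, ⟨f s, ?_⟩, ?_⟩
  · rintro _ ⟨t, ht, rfl⟩
    exact hf.map_mem t (hM ht).1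
  · rintro _ ⟨t, ht, rfl⟩
    exact congrArg f (hM ht).2
  · rintro _ ⟨t, ht, rfl⟩ _ ⟨t', ht', rfl⟩ hne
    exact (hf.conc_map_iff (hM ht) (hM ht')).2 (hcf.2.2 t ht t' ht' fun h => hne (h ▸ rfl))

theorem completeTrace_image (hf : IsBoundedMorphism 𝔗₁ 𝔗₂ f) {s : S₁} {M R : Set (Tr S₁ L)}
    (hR : R ⊆ 𝔗₁.maxSet s) (h : 𝔗₁.CompleteTrace M R) :
    𝔗₂.CompleteTrace (Tr.map f '' M) (Tr.map f '' R) := by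
  obtain ⟨hsupp, hcf, hMR, hmax⟩ := h
  have hcf' := hf.conflictFree_image (hMR.trans hR) hcf
  refine ⟨?_, hcf', Set.image_mono hMR, ?_⟩
  · rcases hsupp with ⟨s', rfl⟩ | ⟨hne, -⟩
    exacts [Or.inl ⟨f s', hf.image_maxSet s'⟩, Or.inr ⟨hne.image _, hcf'⟩]
  · rintro ⟨_, ⟨⟨t, ht, rfl⟩, htM⟩, hconc⟩
    refine hmax ⟨t, ⟨ht, fun h => htM ⟨t, h, rfl⟩⟩, fun t' ht' => ?_⟩
    exact (hf.conc_map_iff (hR ht) (hR (hMR ht'))).1 (hconc _ ⟨t', ht', rfl⟩)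

theorem image_mem_calX (hf : IsBoundedMorphism 𝔗₁ 𝔗₂ f) {R : Set (Tr S₁ L)}
    (hR : R ∈ 𝔗₁.calX) : Tr.map f '' R ∈ 𝔗₂.calX := by
  rcases hR with ⟨s, rfl⟩ | ⟨s, hR⟩
  · exact Or.inl ⟨f s, hf.image_maxSet s⟩
  · exact Or.inr ⟨f s, hf.image_maxSet s ▸ hf.completeTrace_image subset_rfl hR⟩

/-- Complete traces lift along `f`: choose one preimage in `R` for each transition of `M'`.
Two preimages of the same transition are in conflict, so the choice is maximal. -/
theorem exists_completeTrace_image_eq (hf : IsBoundedMorphism 𝔗₁ 𝔗₂ f)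
    (hirr : ∀ u, ¬ 𝔗₂.I u u) {R : Set (Tr S₁ L)} {M' : Set (Tr S₂ L)} (hR : R ∈ 𝔗₁.calX)
    (h : 𝔗₂.CompleteTrace M' (Tr.map f '' R)) :
    ∃ M, 𝔗₁.CompleteTrace M R ∧ Tr.map f '' M = M' := by
  obtain ⟨s, hRs⟩ := Sys.exists_subset_maxSet_of_mem_calX hR
  obtain ⟨-, hcf', hM'R, hmax'⟩ := h
  obtain ⟨M, hMR, hbij⟩ := Set.exists_subset_bijOn (R ∩ Tr.map f ⁻¹' M') (Tr.map f)
  have himage : Tr.map f '' M = M' := by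
    rw [hbij.image_eq, Set.image_inter_preimage, Set.inter_eq_right.2 hM'R]
  have hMR : M ⊆ R := hMR.trans Set.inter_subset_left
  have hcf : 𝔗₁.ConflictFree M := by
    refine ⟨fun t ht => (hRs (hMR ht)).1, ⟨s, fun t ht => (hRs (hMR ht)).2⟩, ?_⟩
    intro t ht t' ht' hne
    refine (hf.conc_map_iff (hRs (hMR ht)) (hRs (hMR ht'))).1 (hcf'.2.2 _ ?_ _ ?_ ?_)
    exacts [himage ▸ ⟨t, ht, rfl⟩, himage ▸ ⟨t', ht', rfl⟩, fun h => hne (hbij.injOn ht ht' h)]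
  have hmax : ¬ ∃ t ∈ R \ M, ∀ t' ∈ M, 𝔗₁.Conc t t' := by
    rintro ⟨t, ⟨htR, htM⟩, hconc⟩
    by_cases hft : t.map f ∈ M'
    · obtain ⟨t₀, ht₀, heq⟩ := himage ▸ hft
      have := (hf.conc_map_iff (hRs htR) (hRs (hMR ht₀))).2 (hconc t₀ ht₀)
      exact hirr _ (heq ▸ this.2)
    · refine hmax' ⟨t.map f, ⟨⟨t, htR, rfl⟩, hft⟩, ?_⟩
      intro u hu
      rw [← himage] at hu
      obtain ⟨t', ht', rfl⟩ := hu
      exact (hf.conc_map_iff (hRs htR) (hRs (hMR ht'))).2 (hconc t' ht')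
  refine ⟨M, ⟨?_, hcf, hMR, hmax⟩, himage⟩
  rcases M.eq_empty_or_nonempty with hM | hne
  · have hRM : R ⊆ M := fun t ht => by_contra fun htM =>
      hmax ⟨t, ⟨ht, htM⟩, fun t' ht' => by simp [hM] at ht'⟩
    rw [hMR.antisymm hRM]
    exact Sys.isSupport_of_mem_calX hR
  · exact Or.inr ⟨hne, hcf⟩

end IsBoundedMorphism

/-- The anchoring condition makes every transition of `p.1` a legal `⟨a⟩`-step of `p`. -/
def Sys.MapRel {S₁ S₂ L : Type} (𝔗₁ : Sys S₁ L) (f : S₁ → S₂) (p : Proc S₁ L)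
    (q : Proc S₂ L) : Prop :=
  p ∈ 𝔗₁.Sspace ∧ (∀ r ∈ p.1, r.src = 𝔗₁.stateAfter p.2) ∧
    q = (Tr.map f '' p.1, p.2.map (Tr.map f))

namespace IsBoundedMorphism

variable {S₁ S₂ L : Type} {𝔗₁ : Sys S₁ L} {𝔗₂ : Sys S₂ L} {f : S₁ → S₂}

theorem stateAfter_map (hf : IsBoundedMorphism 𝔗₁ 𝔗₂ f) (o : Option (Tr S₁ L)) :
    𝔗₂.stateAfter (o.map (Tr.map f)) = f (𝔗₁.stateAfter o) := by
  cases o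
  exacts [hf.map_init.symm, rfl]

theorem mapRel_maxSet (hf : IsBoundedMorphism 𝔗₁ 𝔗₂ f) {r : Tr S₁ L} (hr : r ∈ 𝔗₁.T) :
    𝔗₁.MapRel f (𝔗₁.maxSet r.tgt, some r) (𝔗₂.maxSet (r.map f).tgt, some (r.map f)) :=
  ⟨⟨Sys.maxSet_mem_calX _, hr⟩, fun _ hr' => hr'.2, by
    rw [hf.image_maxSet]; rfl⟩

theorem isTLBisim (hf : IsBoundedMorphism 𝔗₁ 𝔗₂ f) (hirr : ∀ u, ¬ 𝔗₂.I u u) :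
    IsTLBisim 𝔗₁ 𝔗₂ (𝔗₁.MapRel f) := by
  have mem_T : ∀ {R r}, R ∈ 𝔗₁.calX → r ∈ R → r ∈ 𝔗₁.T := fun hR hr =>
    let ⟨_, hs⟩ := Sys.exists_subset_maxSet_of_mem_calX hR; (hs hr).1
  refine ⟨fun _ _ h => h.1, ?_, ?_, ?_, ?_, ?_⟩
  · rintro ⟨R, o⟩ _ ⟨hp, -, rfl⟩
    refine ⟨hf.image_mem_calX hp.1, ?_⟩
    cases o
    exacts [trivial, hf.map_mem _ hp.2]
  · rintro ⟨R, o⟩ _ ⟨hp, -, rfl⟩ r hr hsrc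
    exact ⟨r.map f, ⟨r, hr, rfl⟩, rfl, (congrArg f hsrc).trans (hf.stateAfter_map o).symm,
      hf.mapRel_maxSet (mem_T hp.1 hr)⟩
  · rintro ⟨R, o⟩ _ ⟨hp, hanch, rfl⟩ _ ⟨r, hr, rfl⟩ -
    exact ⟨r, hr, rfl, hanch r hr, hf.mapRel_maxSet (mem_T hp.1 hr)⟩
  · rintro ⟨R, o⟩ _ ⟨hp, hanch, rfl⟩ M hM
    obtain ⟨s, hRs⟩ := Sys.exists_subset_maxSet_of_mem_calX hp.1
    exact ⟨_, hf.completeTrace_image hRs hM, ⟨hM.mem_calX hp.1, hp.2⟩,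
      fun r hr => hanch r (hM.2.2.1 hr), rfl⟩
  · rintro ⟨R, o⟩ _ ⟨hp, hanch, rfl⟩ M' hM'
    obtain ⟨M, hM, rfl⟩ := hf.exists_completeTrace_image_eq hirr hp.1 hM'
    exact ⟨M, hM, ⟨hM.mem_calX hp.1, hp.2⟩, fun r hr => hanch r (hM.2.2.1 hr), rfl⟩

theorem tlmuEquiv (hf : IsBoundedMorphism 𝔗₁ 𝔗₂ f) (hirr : ∀ u, ¬ 𝔗₂.I u u) :
    TLmuEquiv 𝔗₁ 𝔗₂ :=
  (hf.isTLBisim hirr).tlmuEquiv ⟨⟨Sys.maxSet_mem_calX _, trivial⟩, fun _ hr => hr.2, by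
    rw [Sys.initProc, Sys.initProc, hf.image_maxSet, hf.map_init]; rfl⟩

end IsBoundedMorphism

namespace Sys

section Decidable

variable {S L : Type} [DecidableEq S] (𝔗 : Sys S L) [∀ t u, Decidable (𝔗.I t u)]

instance (t u : Tr S L) : Decidable (𝔗.Conc t u) := inferInstanceAs (Decidable (_ ∧ _))

instance [Fintype L] [DecidableEq L] (t u : Tr S L) : Decidable (𝔗.Prec t u) :=
  inferInstanceAs (Decidable (_ ∧ ∃ _, _ ∧ _ ∧ _))

instance decidableIsRunFrom [DecidablePred (· ∈ 𝔗.T)] :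
    ∀ s π, Decidable (𝔗.IsRunFrom s π)
  | _, [] => isTrue trivial
  | _, t :: π =>
    haveI := decidableIsRunFrom t.tgt π
    inferInstanceAs (Decidable (_ ∧ _ ∧ _))

instance [DecidablePred (· ∈ 𝔗.T)] (π : List (Tr S L)) : Decidable (𝔗.IsRun π) :=
  decidableIsRunFrom 𝔗 _ π

end Decidable

section ofList

variable {S L : Type}

def ofList (s₀ : S) (ts : List (Tr S L)) (ind : List (Tr S L × Tr S L)) : Sys S L where
  init := s₀
  T := {t | t ∈ ts}
  I t u := (t, u) ∈ ind ∨ (u, t) ∈ ind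

variable {s₀ : S} {ts : List (Tr S L)} {ind : List (Tr S L × Tr S L)}

/-- `κ` names the events of the transitions; its fibres contain the classes of `∼`, which is
how A1 is checked on finitely many pairs. -/
theorem isTSI_ofList {ι : Type} (κ : Tr S L → ι)
    (h_dom : ∀ p ∈ ind, p.1 ∈ ts ∧ p.2 ∈ ts) (h_irrefl : ∀ p ∈ ind, p.1 ≠ p.2)
    (h_prec : ∀ t ∈ ts, ∀ u ∈ ts, (ofList s₀ ts ind).Prec t u →
      κ t = κ u ∧ ∀ t' ∈ ts, ((ofList s₀ ts ind).I t t' ↔ (ofList s₀ ts ind).I u t'))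
    (h_A1 : ∀ t ∈ ts, ∀ u ∈ ts, κ t = κ u → t.src = u.src → t.lbl = u.lbl → t.tgt = u.tgt)
    (h_A2 : ∀ t ∈ ts, ∀ u ∈ ts, (ofList s₀ ts ind).I t u → t.src = u.src →
      ∃ q, (ofList s₀ ts ind).I t ⟨t.tgt, u.lbl, q⟩ ∧ (ofList s₀ ts ind).I u ⟨u.tgt, t.lbl, q⟩)
    (h_A3 : ∀ t ∈ ts, ∀ u ∈ ts, (ofList s₀ ts ind).I t u → t.tgt = u.src →
      ∃ s₂, (ofList s₀ ts ind).I t ⟨t.src, u.lbl, s₂⟩ ∧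
        (ofList s₀ ts ind).I ⟨t.src, u.lbl, s₂⟩ ⟨s₂, t.lbl, u.tgt⟩) :
    (ofList s₀ ts ind).IsTSI := by
  set 𝔗 := ofList s₀ ts ind
  have hdom {t u} : 𝔗.I t u → t ∈ ts ∧ u ∈ ts := by
    rintro (h | h)
    exacts [h_dom _ h, (h_dom _ h).symm]
  have hprec {t u} (h : 𝔗.Prec t u) : t ∈ ts ∧ u ∈ ts :=
    ⟨(hdom h.2.choose_spec.1).1, (hdom h.2.choose_spec.2.2).2⟩
  have sim_κ : ∀ {t u}, 𝔗.Sim t u → t = u ∨ (t ∈ ts ∧ u ∈ ts ∧ κ t = κ u) := by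
    refine 𝔗.sim_of_prec (r := fun t u => t = u ∨ (t ∈ ts ∧ u ∈ ts ∧ κ t = κ u))
      ⟨fun _ => Or.inl rfl, ?_, ?_⟩ fun t u h =>
      Or.inr ⟨(hprec h).1, (hprec h).2, (h_prec t (hprec h).1 u (hprec h).2 h).1⟩
    · rintro t u (rfl | ⟨ht, hu, h⟩)
      exacts [Or.inl rfl, Or.inr ⟨hu, ht, h.symm⟩]
    · rintro t u w (rfl | ⟨ht, hu, h⟩) (rfl | ⟨hu', hw, h'⟩)
      exacts [Or.inl rfl, Or.inr ⟨hu', hw, h'⟩, Or.inr ⟨ht, hu, h⟩, Or.inr ⟨ht, hw, h.trans h'⟩]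
  have sim_I : ∀ {t u}, 𝔗.Sim t u → ∀ t', 𝔗.I t t' ↔ 𝔗.I u t' := by
    refine 𝔗.sim_of_prec (r := fun t u => ∀ t', 𝔗.I t t' ↔ 𝔗.I u t')
      ⟨fun _ _ => Iff.rfl, fun h t' => (h t').symm, fun h h' t' => (h t').trans (h' t')⟩
      fun t u h t' => ?_
    by_cases ht' : t' ∈ ts
    · exact (h_prec t (hprec h).1 u (hprec h).2 h).2 t' ht'
    · exact iff_of_false (fun h => ht' (hdom h).2) fun h => ht' (hdom h).2
  refine ⟨fun _ _ => hdom, ?_, fun _ _ => Or.symm, ?_, ?_, ?_, fun _ _ => sim_I⟩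
  · rintro t (h | h) <;> exact h_irrefl _ h rfl
  · intro t u hs hsrc hlbl
    rcases sim_κ hs with rfl | ⟨ht, hu, hκ⟩
    exacts [rfl, h_A1 t ht u hu hκ hsrc hlbl]
  · exact fun t u h => h_A2 t (hdom h).1 u (hdom h).2 h
  · exact fun t u h => h_A3 t (hdom h).1 u (hdom h).2 h

theorem noAutoConc_ofList (h : ∀ p ∈ ind, p.1.src = p.2.src → p.1.lbl ≠ p.2.lbl) :
    (ofList s₀ ts ind).NoAutoConc := by
  rintro t t' - - ⟨hsrc, h' | h'⟩
  exacts [h _ h' hsrc, (h _ h' hsrc.symm).symm]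

variable [DecidableEq S] [DecidableEq L]

instance (t : Tr S L) : Decidable (t ∈ (ofList s₀ ts ind).T) :=
  inferInstanceAs (Decidable (t ∈ ts))

instance (t u : Tr S L) : Decidable ((ofList s₀ ts ind).I t u) :=
  inferInstanceAs (Decidable (_ ∨ _))

instance (P : Tr S L → Prop) [DecidablePred P] : Decidable (∀ t ∈ (ofList s₀ ts ind).T, P t) :=
  inferInstanceAs (Decidable (∀ t ∈ ts, P t))

instance (P : Tr S L → Prop) [DecidablePred P] : Decidable (∃ t ∈ (ofList s₀ ts ind).T, P t) :=
  inferInstanceAs (Decidable (∃ t ∈ ts, P t))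

end ofList

end Sys

/-- Runs with the same labels and the same independence matrix, position by position. -/
def Aligned {S₁ S₂ L : Type} (𝔗₁ : Sys S₁ L) (𝔗₂ : Sys S₂ L) (π₁ : List (Tr S₁ L))
    (π₂ : List (Tr S₂ L)) : Prop :=
  List.Forall₂ (fun t v => t.lbl = v.lbl ∧
    List.Forall₂ (fun t' v' => 𝔗₁.I t t' ↔ 𝔗₂.I v v') π₁ π₂) π₁ π₂

instance {S₁ S₂ L : Type} (𝔗₁ : Sys S₁ L) (𝔗₂ : Sys S₂ L) [∀ t u, Decidable (𝔗₁.I t u)]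
    [∀ t u, Decidable (𝔗₂.I t u)] [DecidableEq L] (π₁ : List (Tr S₁ L)) (π₂ : List (Tr S₂ L)) :
    Decidable (Aligned 𝔗₁ 𝔗₂ π₁ π₂) :=
  inferInstanceAs (Decidable (List.Forall₂ _ _ _))

namespace Aligned

variable {S₁ S₂ L : Type} {𝔗₁ : Sys S₁ L} {𝔗₂ : Sys S₂ L} {π₁ : List (Tr S₁ L)}
  {π₂ : List (Tr S₂ L)} {u : Tr S₁ L} {v : Tr S₂ L}

theorem posetIso (h : Aligned 𝔗₁ 𝔗₂ π₁ π₂) : PosetIso 𝔗₁ 𝔗₂ π₁ π₂ := by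
  obtain ⟨hlen, hget⟩ := List.forall₂_iff_get.1 h
  set e := finCongr hlen
  have step : ∀ i j, (i < j ∧ ¬ 𝔗₁.I (π₁.get i) (π₁.get j)) ↔
      (e i < e j ∧ ¬ 𝔗₂.I (π₂.get (e i)) (π₂.get (e j))) := fun i j => by
    have hI := (List.forall₂_iff_get.1 (hget i i.2 (hlen ▸ i.2)).2).2 j j.2 (hlen ▸ j.2)
    exact and_congr Iff.rfl (not_congr hI)
  refine ⟨e, fun i => (hget i i.2 (hlen ▸ i.2)).1, fun i j => ⟨fun hr => ?_, fun hr => ?_⟩⟩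
  · exact hr.lift e fun a b h => (step a b).1 h
  · have := hr.lift (p := fun i j => i < j ∧ ¬ 𝔗₁.I (π₁.get i) (π₁.get j)) e.symm
      fun a b h => (step _ _).2 (by simpa using h)
    simpa only [Function.onFun, Equiv.symm_apply_apply, Sys.runOrder] using this

theorem snoc_lbl_eq_and_lastIndep_iff (h : Aligned 𝔗₁ 𝔗₂ (π₁ ++ [u]) (π₂ ++ [v])) :
    u.lbl = v.lbl ∧ (𝔗₁.lastIndep π₁ u ↔ 𝔗₂.lastIndep π₂ v) := by
  unfold Aligned at h
  rw [← List.forall₂_reverse_iff] at h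
  simp only [List.reverse_append, List.reverse_singleton, List.singleton_append,
    List.forall₂_cons] at h
  obtain ⟨⟨hlbl, -⟩, h⟩ := h
  refine ⟨hlbl, ?_⟩
  simp only [Sys.lastIndep, ← List.head?_reverse]
  generalize π₁.reverse = r₁ at h ⊢
  generalize π₂.reverse = r₂ at h ⊢
  cases h with
  | nil => simp
  | cons hxy _ =>
    obtain ⟨-, hI⟩ := hxy
    rw [← List.forall₂_reverse_iff] at hI
    simp only [List.reverse_append, List.reverse_singleton, List.singleton_append,
      List.forall₂_cons] at hI
    simpa using hI.1

theorem syncExt (h : Aligned 𝔗₁ 𝔗₂ (π₁ ++ [u]) (π₂ ++ [v])) : SyncExt 𝔗₁ 𝔗₂ π₁ π₂ u v :=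
  ⟨h.snoc_lbl_eq_and_lastIndep_iff.2, h.posetIso⟩

end Aligned

theorem isHPB_of_pairs {S₁ S₂ L : Type} {𝔗₁ : Sys S₁ L} {𝔗₂ : Sys S₂ L}
    (pairs : List (List (Tr S₁ L) × List (Tr S₂ L))) (base : ([], []) ∈ pairs)
    (runs : ∀ p ∈ pairs, 𝔗₁.IsRun p.1 ∧ 𝔗₂.IsRun p.2)
    (fwd : ∀ p ∈ pairs, ∀ u ∈ 𝔗₁.T, u.src = 𝔗₁.endState p.1 →
      ∃ v ∈ 𝔗₂.T, v.src = 𝔗₂.endState p.2 ∧ Aligned 𝔗₁ 𝔗₂ (p.1 ++ [u]) (p.2 ++ [v]) ∧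
        (p.1 ++ [u], p.2 ++ [v]) ∈ pairs)
    (bwd : ∀ p ∈ pairs, ∀ v ∈ 𝔗₂.T, v.src = 𝔗₂.endState p.2 →
      ∃ u ∈ 𝔗₁.T, u.src = 𝔗₁.endState p.1 ∧ Aligned 𝔗₁ 𝔗₂ (p.1 ++ [u]) (p.2 ++ [v]) ∧
        (p.1 ++ [u], p.2 ++ [v]) ∈ pairs) :
    IsHPB 𝔗₁ 𝔗₂ fun π₁ π₂ => (π₁, π₂) ∈ pairs where
  base := base
  runs _ _ h := runs _ h
  fwd _ _ h u hu hsrc := by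
    obtain ⟨v, hv, hvsrc, hal, hmem⟩ := fwd _ h u hu hsrc
    exact ⟨v, hv, hvsrc, hal.snoc_lbl_eq_and_lastIndep_iff.1.symm, hal.syncExt, hmem⟩
  bwd _ _ h v hv hsrc := by
    obtain ⟨u, hu, husrc, hal, hmem⟩ := bwd _ h v hv hsrc
    exact ⟨u, hu, husrc, hal.snoc_lbl_eq_and_lastIndep_iff.1, hal.syncExt, hmem⟩

namespace Diamonds

/-- Labels `0, 1, 2, 3` stand for `a, b, c, d`. -/
def diamond (i : Fin 9) : List (Tr (Fin 9) (Fin 4)) :=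
  [⟨0, 0, i⟩, ⟨0, 1, i + 2⟩, ⟨i, 1, i + 4⟩, ⟨i + 2, 0, i + 4⟩]

def diamondIndep (i : Fin 9) : List (Tr (Fin 9) (Fin 4) × Tr (Fin 9) (Fin 4)) :=
  [(⟨0, 0, i⟩, ⟨0, 1, i + 2⟩), (⟨0, 0, i⟩, ⟨i, 1, i + 4⟩), (⟨0, 1, i + 2⟩, ⟨i + 2, 0, i + 4⟩),
    (⟨i, 1, i + 4⟩, ⟨i + 2, 0, i + 4⟩)]

/-- The diamond through `1` lives on odd states, the one through `2` and the extra transitions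
on even ones, so label and parity of the target determine the event. -/
def event (t : Tr (Fin 9) (Fin 4)) : Fin 4 × ℕ := (t.lbl, t.tgt.val % 2)

abbrev square : Sys (Fin 9) (Fin 4) := .ofList 0 (diamond 1) (diamondIndep 1)

/-- A further `b` after `a`, caused by it. -/
abbrev squareTail : Sys (Fin 9) (Fin 4) := .ofList 0 (diamond 1 ++ [⟨1, 1, 8⟩]) (diamondIndep 1)

theorem square_isTSI : square.IsTSI :=
  Sys.isTSI_ofList event (by decide) (by decide) (by decide) (by decide) (by decide) (by decide)

theorem squareTail_isTSI : squareTail.IsTSI :=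
  Sys.isTSI_ofList event (by decide) (by decide) (by decide) (by decide) (by decide) (by decide)

theorem squareTail_tlmuEquiv : TLmuEquiv squareTail square :=
  IsBoundedMorphism.tlmuEquiv (f := fun s => if s = 8 then 5 else s)
    ⟨by decide, by decide, by decide, by decide⟩ square_isTSI.I_irrefl

theorem squareTail_not_hpBisimilar : ¬ HPBisimilar squareTail square := by
  rintro ⟨R, hR⟩
  obtain ⟨v, hv, hvsrc, hvlbl, -, hRv⟩ := hR.fwd hR.base (u := ⟨0, 0, 1⟩) (by decide) rfl
  obtain rfl : v = ⟨0, 0, 1⟩ :=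
    (by decide : ∀ v ∈ square.T, v.src = 0 → v.lbl = 0 → v = ⟨0, 0, 1⟩) v hv hvsrc hvlbl
  obtain ⟨w, hw, hwsrc, hwlbl, hsync, -⟩ := hR.fwd hRv (u := ⟨1, 1, 8⟩) (by decide) rfl
  obtain rfl : w = ⟨1, 1, 5⟩ :=
    (by decide : ∀ w ∈ square.T, w.src = 1 → w.lbl = 1 → w = ⟨1, 1, 5⟩) w hw hwsrc hwlbl
  have hindep := hsync.1
  simp only [List.nil_append, Sys.lastIndep_singleton] at hindep
  exact absurd hindep (by decide)

/-- `c` follows the `a` and `d` the `b` of the same diamond. -/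
abbrev together : Sys (Fin 9) (Fin 4) :=
  .ofList 0 (diamond 1 ++ diamond 2 ++ [⟨1, 2, 7⟩, ⟨3, 3, 8⟩]) (diamondIndep 1 ++ diamondIndep 2)

/-- `d` follows the `b` of the other diamond. -/
abbrev apart : Sys (Fin 9) (Fin 4) :=
  .ofList 0 (diamond 1 ++ diamond 2 ++ [⟨1, 2, 7⟩, ⟨4, 3, 8⟩]) (diamondIndep 1 ++ diamondIndep 2)

theorem together_isTSI : together.IsTSI :=
  Sys.isTSI_ofList event (by decide) (by decide) (by decide) (by decide) (by decide) (by decide)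

theorem apart_isTSI : apart.IsTSI :=
  Sys.isTSI_ofList event (by decide) (by decide) (by decide) (by decide) (by decide) (by decide)

/-- Runs of `together` are matched with the same runs of `apart`, except that the diamonds are
swapped when the run starts with `b`. -/
def matchedRuns : List (List (Tr (Fin 9) (Fin 4)) × List (Tr (Fin 9) (Fin 4))) :=
  [([], []),
    ([⟨0, 0, 1⟩], [⟨0, 0, 1⟩]), ([⟨0, 0, 2⟩], [⟨0, 0, 2⟩]),
    ([⟨0, 1, 3⟩], [⟨0, 1, 4⟩]), ([⟨0, 1, 4⟩], [⟨0, 1, 3⟩]),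
    ([⟨0, 0, 1⟩, ⟨1, 2, 7⟩], [⟨0, 0, 1⟩, ⟨1, 2, 7⟩]),
    ([⟨0, 0, 1⟩, ⟨1, 1, 5⟩], [⟨0, 0, 1⟩, ⟨1, 1, 5⟩]),
    ([⟨0, 0, 2⟩, ⟨2, 1, 6⟩], [⟨0, 0, 2⟩, ⟨2, 1, 6⟩]),
    ([⟨0, 1, 3⟩, ⟨3, 3, 8⟩], [⟨0, 1, 4⟩, ⟨4, 3, 8⟩]),
    ([⟨0, 1, 3⟩, ⟨3, 0, 5⟩], [⟨0, 1, 4⟩, ⟨4, 0, 6⟩]),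
    ([⟨0, 1, 4⟩, ⟨4, 0, 6⟩], [⟨0, 1, 3⟩, ⟨3, 0, 5⟩])]

theorem together_hpBisimilar_apart : HPBisimilar together apart :=
  ⟨_, isHPB_of_pairs matchedRuns (by decide) (by decide) (by decide) (by decide)⟩

theorem together_sat :
    together.initProc ∈ TLmu.denot together (fun _ => ∅)
      (.diaOx (.and (.dia 0 (.dia 2 .tt)) (.dia 1 (.dia 3 .tt)))) :=
  Sys.initProc_mem_denot_diaOx_iff.2 ⟨_,
    Sys.completeTrace_maxSet (m := [⟨0, 0, 1⟩, ⟨0, 1, 3⟩]) (by decide) (by decide) (by decide)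
      (by decide),
    ⟨⟨0, 0, 1⟩, by simp, rfl, ⟨1, 2, 7⟩, ⟨by decide, rfl⟩, rfl⟩,
    ⟨⟨0, 1, 3⟩, by simp, rfl, ⟨3, 3, 8⟩, ⟨by decide, rfl⟩, rfl⟩⟩

/-- In `apart` the `a` enabling `c` and the `b` enabling `d` lie in different diamonds, so they
are in conflict and no maximal trace contains both. -/
theorem apart_not_sat :
    apart.initProc ∉ TLmu.denot apart (fun _ => ∅)
      (.diaOx (.and (.dia 0 (.dia 2 .tt)) (.dia 1 (.dia 3 .tt)))) := by
  rw [Sys.initProc_mem_denot_diaOx_iff]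
  rintro ⟨M, hM, ⟨r, hr, hrl, r', ⟨hr'T, hr'src⟩, hr'l⟩, ⟨u, hu, hul, u', ⟨hu'T, hu'src⟩, hu'l⟩⟩
  have hconc := hM.2.1.2.2 r hr u hu fun h => absurd (hrl.symm.trans (h ▸ hul)) (by decide)
  have hconflict : ∀ r ∈ apart.T, ∀ u ∈ apart.T, r.src = 0 → u.src = 0 → r.lbl = 0 → u.lbl = 1 →
      (∃ r' ∈ apart.T, r'.src = r.tgt ∧ r'.lbl = 2) →
      (∃ u' ∈ apart.T, u'.src = u.tgt ∧ u'.lbl = 3) → ¬ apart.Conc r u := by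
    decide
  exact hconflict r (hM.2.2.1 hr).1 u (hM.2.2.1 hu).1 (hM.2.2.1 hr).2 (hM.2.2.1 hu).2 hrl hul
    ⟨r', hr'T, hr'src, hr'l⟩ ⟨u', hu'T, hu'src, hu'l⟩ hconc

end Diamonds

end TC

open TC in
/-- History-preserving bisimilarity and `TLμ`-equivalence are
incomparable: there exist finite systems `𝔗₁ ∼_hpb 𝔗₂` that are distinguished
by the `TLμ` formula `⟨⊗⟩(⟨a⟩⟨c⟩tt ∧ ⟨b⟩⟨d⟩tt)`, and there exist finite
systems `𝔗₃ ∼_{TLμ} 𝔗₄` with `𝔗₃ ≁_hpb 𝔗₄`. Hence neither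
`∼_hpb ⊆ ∼_{TLμ}` nor `∼_{TLμ} ⊆ ∼_hpb`. -/
theorem hpb_tlmu_incomparable :
    (∃ (S₁ S₂ L : Type) (𝔗₁ : Sys S₁ L) (𝔗₂ : Sys S₂ L),
      𝔗₁.IsTSI ∧ 𝔗₂.IsTSI ∧ Finite S₁ ∧ Finite S₂ ∧ 𝔗₁.T.Finite ∧ 𝔗₂.T.Finite ∧
      𝔗₁.NoAutoConc ∧ 𝔗₂.NoAutoConc ∧
      HPBisimilar 𝔗₁ 𝔗₂ ∧ ¬ TLmuEquiv 𝔗₁ 𝔗₂ ∧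
      ∃ a b c d : L,
        ¬ ((𝔗₁.initProc ∈ TLmu.denot 𝔗₁ (fun _ => ∅)
              (TLmu.diaOx (TLmu.and (TLmu.dia a (TLmu.dia c TLmu.tt))
                (TLmu.dia b (TLmu.dia d TLmu.tt))))) ↔
           (𝔗₂.initProc ∈ TLmu.denot 𝔗₂ (fun _ => ∅)
              (TLmu.diaOx (TLmu.and (TLmu.dia a (TLmu.dia c TLmu.tt))
                (TLmu.dia b (TLmu.dia d TLmu.tt))))))) ∧
    (∃ (S₃ S₄ L : Type) (𝔗₃ : Sys S₃ L) (𝔗₄ : Sys S₄ L),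
      𝔗₃.IsTSI ∧ 𝔗₄.IsTSI ∧ Finite S₃ ∧ Finite S₄ ∧ 𝔗₃.T.Finite ∧ 𝔗₄.T.Finite ∧
      𝔗₃.NoAutoConc ∧ 𝔗₄.NoAutoConc ∧
      TLmuEquiv 𝔗₃ 𝔗₄ ∧ ¬ HPBisimilar 𝔗₃ 𝔗₄) := by
  open Diamonds in
  have distinguished : ¬ (together.initProc ∈ _ ↔ apart.initProc ∈ _) := fun h =>
    apart_not_sat (h.1 together_sat)
  refine ⟨⟨_, _, _, together, apart, together_isTSI, apart_isTSI, inferInstance, inferInstance,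
      List.finite_toSet _, List.finite_toSet _, Sys.noAutoConc_ofList (by decide),
      Sys.noAutoConc_ofList (by decide), together_hpBisimilar_apart,
      fun h => distinguished (h _ ⟨trivial, trivial⟩ (by simp [TLmu.FV])), 0, 1, 2, 3,
      distinguished⟩,
    ⟨_, _, _, squareTail, square, squareTail_isTSI, square_isTSI, inferInstance, inferInstance,
      List.finite_toSet _, List.finite_toSet _, Sys.noAutoConc_ofList (by decide),
      Sys.noAutoConc_ofList (by decide), squareTail_tlmuEquiv, squareTail_not_hpBisimilar⟩⟩
end

section
/- Logical soundness of the causal modal mu-calculus: for all systems 𝔗₁ and 𝔗₂ (image-finite and without auto-concurrency), if 𝔗₁ ∼_hpb 𝔗₂ then 𝔗₁ ∼_{Cμ} 𝔗₂; that is, ∼_hpb ⊆ ∼_{Cμ}. -/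
namespace TC

/-- Formulae of the causal modal mu-calculus `Cμ`
(the `⟨⊗⟩`-free fragment of TFL). -/
inductive Cmu (L : Type) where
  | tt : Cmu L
  | var : ℕ → Cmu L
  | neg : Cmu L → Cmu L
  | and : Cmu L → Cmu L → Cmu L
  | diaC : L → Cmu L → Cmu L
  | diaNC : L → Cmu L → Cmu L
  | mu : ℕ → Cmu L → Cmu L

/-- Processes for `Cμ`: pairs `(s, t)` of a state and the incoming transition
(`none` is the empty transition `t_ε`, at `s₀`). -/
def Sys.CSpace {S L : Type} (𝔗 : Sys S L) : Set (S × Option (Tr S L)) :=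
  {p | match p.2 with
    | none => p.1 = 𝔗.init
    | some t => t ∈ 𝔗.T ∧ t.tgt = p.1}

namespace Cmu

variable {S L : Type}

/-- Denotation of `Cμ` formulae over pairs of a state
and its incoming transition. -/
def denot (𝔗 : Sys S L) (V : ℕ → Set (S × Option (Tr S L))) :
    Cmu L → Set (S × Option (Tr S L))
  | .tt => 𝔗.CSpace
  | .var n => V n
  | .neg φ => 𝔗.CSpace \ denot 𝔗 V φ
  | .and φ ψ => denot 𝔗 V φ ∩ denot 𝔗 V ψ
  | .diaC a φ => {p | p ∈ 𝔗.CSpace ∧ ∃ r ∈ 𝔗.T, r.src = p.1 ∧ r.lbl = a ∧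
      𝔗.CausA p.2 r ∧ (r.tgt, some r) ∈ denot 𝔗 V φ}
  | .diaNC a φ => {p | p ∈ 𝔗.CSpace ∧ ∃ r ∈ 𝔗.T, r.src = p.1 ∧ r.lbl = a ∧
      𝔗.LinA p.2 r ∧ (r.tgt, some r) ∈ denot 𝔗 V φ}
  | .mu n φ => ⋂₀ {Q | Q ⊆ 𝔗.CSpace ∧ denot 𝔗 (Function.update V n Q) φ ⊆ Q}

/-- Free variables of a `Cμ` formula. -/
def FV : Cmu L → Set ℕ
  | .tt => ∅
  | .var n => {n}
  | .neg φ => FV φ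
  | .and φ ψ => FV φ ∪ FV ψ
  | .diaC _ φ => FV φ
  | .diaNC _ φ => FV φ
  | .mu n φ => FV φ \ {n}

/-- Fixpoint-free `Cμ` formulae. -/
def FpFree : Cmu L → Prop
  | .tt => True
  | .var _ => True
  | .neg φ => FpFree φ
  | .and φ ψ => FpFree φ ∧ FpFree ψ
  | .diaC _ φ => FpFree φ
  | .diaNC _ φ => FpFree φ
  | .mu _ _ => False

end Cmu

/-- `Cμ`-equivalence: the initial processes `(s₀, t_ε)` satisfy the same
fixpoint-free closed `Cμ` formulae. -/
def CmuEquiv {S₁ S₂ L : Type} (𝔗₁ : Sys S₁ L) (𝔗₂ : Sys S₂ L) : Prop :=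
  ∀ φ : Cmu L, φ.FpFree → φ.FV = ∅ →
    (((𝔗₁.init, none) : S₁ × Option (Tr S₁ L)) ∈ Cmu.denot 𝔗₁ (fun _ => ∅) φ ↔
     ((𝔗₂.init, none) : S₂ × Option (Tr S₂ L)) ∈ Cmu.denot 𝔗₂ (fun _ => ∅) φ)

end TC

namespace TC

private lemma mem_of_getLast?' {α : Type} {l : List α} {t : α}
    (h : l.getLast? = some t) : t ∈ l := by
  induction l with
  | nil => simp at h
  | cons a l ih =>
    rcases l with _ | ⟨b, l⟩
    · simp_all
    · simp only [List.getLast?_cons_cons] at h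
      exact List.mem_cons_of_mem _ (ih h)

private lemma mem_T_of_runFrom {S L : Type} (𝔗 : Sys S L) :
    ∀ (π : List (Tr S L)) (s : S), 𝔗.IsRunFrom s π → ∀ t ∈ π, t ∈ 𝔗.T := by
  intro π
  induction π with
  | nil => simp
  | cons a l ih =>
    rintro s ⟨h1, _, h3⟩ t ht
    rcases List.mem_cons.mp ht with rfl | ht
    · exact h1
    · exact ih _ h3 t ht

private lemma endState_concat {S L : Type} (𝔗 : Sys S L) (π : List (Tr S L))
    (u : Tr S L) : 𝔗.endState (π ++ [u]) = u.tgt := by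
  simp [Sys.endState, List.getLast?_concat]

private lemma endState_of_getLast {S L : Type} (𝔗 : Sys S L) {π : List (Tr S L)}
    {t : Tr S L} (h : π.getLast? = some t) : 𝔗.endState π = t.tgt := by
  simp [Sys.endState, h]

private lemma proc_mem_CSpace {S L : Type} (𝔗 : Sys S L) {π : List (Tr S L)}
    (h : 𝔗.IsRun π) : (𝔗.endState π, π.getLast?) ∈ 𝔗.CSpace := by
  cases h' : π.getLast? with
  | none => simp [Sys.CSpace, Sys.endState, h']
  | some t =>
    refine ⟨mem_T_of_runFrom 𝔗 π _ h t (mem_of_getLast?' h'), ?_⟩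
    exact (endState_of_getLast 𝔗 h').symm

private lemma hpb_key {S₁ S₂ L : Type} (𝔗₁ : Sys S₁ L) (𝔗₂ : Sys S₂ L)
    (R : List (Tr S₁ L) → List (Tr S₂ L) → Prop) (hR : IsHPB 𝔗₁ 𝔗₂ R) :
    ∀ φ : Cmu L, φ.FpFree → φ.FV = ∅ →
      ∀ π₁ π₂, R π₁ π₂ → π₁.length = π₂.length →
      ((𝔗₁.endState π₁, π₁.getLast?) ∈ Cmu.denot 𝔗₁ (fun _ => ∅) φ ↔
       (𝔗₂.endState π₂, π₂.getLast?) ∈ Cmu.denot 𝔗₂ (fun _ => ∅) φ) := by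
  intro φ
  induction φ with
  | tt =>
    intro _ _ π₁ π₂ hr _
    exact ⟨fun _ => proc_mem_CSpace 𝔗₂ (hR.runs hr).2,
           fun _ => proc_mem_CSpace 𝔗₁ (hR.runs hr).1⟩
  | var n =>
    intro _ hfv
    exact absurd hfv (by simp [Cmu.FV])
  | neg φ ih =>
    intro hfp hfv π₁ π₂ hr hlen
    have H := ih hfp hfv π₁ π₂ hr hlen
    simp only [Cmu.denot, Set.mem_diff]
    constructor
    · rintro ⟨_, h2⟩
      exact ⟨proc_mem_CSpace 𝔗₂ (hR.runs hr).2, fun h => h2 (H.mpr h)⟩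
    · rintro ⟨_, h2⟩
      exact ⟨proc_mem_CSpace 𝔗₁ (hR.runs hr).1, fun h => h2 (H.mp h)⟩
  | and φ ψ ihφ ihψ =>
    intro hfp hfv π₁ π₂ hr hlen
    obtain ⟨hfv1, hfv2⟩ := Set.union_empty_iff.mp hfv
    simp only [Cmu.denot, Set.mem_inter_iff]
    exact and_congr (ihφ hfp.1 hfv1 π₁ π₂ hr hlen) (ihψ hfp.2 hfv2 π₁ π₂ hr hlen)
  | diaC a φ ih =>
    intro hfp hfv π₁ π₂ hr hlen
    constructor
    · rintro ⟨_, r, hrT, hrsrc, hrlbl, hcaus, hden⟩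
      obtain ⟨v, hvT, hvsrc, hvlbl, hsync, hrext⟩ := hR.fwd hr hrT hrsrc
      refine ⟨proc_mem_CSpace 𝔗₂ (hR.runs hr).2, v, hvT, hvsrc, hvlbl.trans hrlbl, ?_, ?_⟩
      · cases h1 : π₁.getLast? with
        | none =>
          have hπ₁ : π₁ = [] := by simpa using h1
          have hπ₂ : π₂ = [] := by
            rw [hπ₁] at hlen; exact List.length_eq_zero_iff.mp hlen.symm
          subst hπ₂
          show Sys.CausA 𝔗₂ none v
          simpa [Sys.CausA, Sys.endState] using hvsrc
        | some t₁ =>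
          cases h2 : π₂.getLast? with
          | none =>
            exfalso
            have hπ₂ : π₂ = [] := by simpa using h2
            have hπ₁ : π₁ = [] := by
              subst hπ₂; simpa using List.length_eq_zero_iff.mp hlen
            rw [hπ₁] at h1; simp at h1
          | some t₂ =>
            refine ⟨(hvsrc.trans (endState_of_getLast 𝔗₂ h2)).symm, fun hI => ?_⟩
            obtain ⟨t, h1', hI'⟩ := hsync.1.mpr ⟨t₂, h2, hI⟩
            rw [h1] at h1' hcaus
            cases Option.some.inj h1'
            exact hcaus.2 hI'
      · have H := ih hfp hfv (π₁ ++ [r]) (π₂ ++ [v]) hrext (by simp [hlen])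
        rw [endState_concat, endState_concat, List.getLast?_concat,
          List.getLast?_concat] at H
        exact H.mp hden
    · rintro ⟨_, v, hvT, hvsrc, hvlbl, hcaus, hden⟩
      obtain ⟨u, huT, husrc, hulbl, hsync, hrext⟩ := hR.bwd hr hvT hvsrc
      refine ⟨proc_mem_CSpace 𝔗₁ (hR.runs hr).1, u, huT, husrc, hulbl.trans hvlbl, ?_, ?_⟩
      · cases h1 : π₂.getLast? with
        | none =>
          have hπ₂ : π₂ = [] := by simpa using h1
          have hπ₁ : π₁ = [] := by
            subst hπ₂; simpa using List.length_eq_zero_iff.mp hlen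
          subst hπ₁
          show Sys.CausA 𝔗₁ none u
          simpa [Sys.CausA, Sys.endState] using husrc
        | some t₂ =>
          cases h2 : π₁.getLast? with
          | none =>
            exfalso
            have hπ₁ : π₁ = [] := by simpa using h2
            have hπ₂ : π₂ = [] := by
              rw [hπ₁] at hlen; simpa using (List.length_eq_zero_iff.mp hlen.symm)
            rw [hπ₂] at h1; simp at h1
          | some t₁ =>
            refine ⟨(husrc.trans (endState_of_getLast 𝔗₁ h2)).symm, fun hI => ?_⟩
            obtain ⟨t, h1', hI'⟩ := hsync.1.mp ⟨t₁, h2, hI⟩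
            rw [h1] at h1' hcaus
            cases Option.some.inj h1'
            exact hcaus.2 hI'
      · have H := ih hfp hfv (π₁ ++ [u]) (π₂ ++ [v]) hrext (by simp [hlen])
        rw [endState_concat, endState_concat, List.getLast?_concat,
          List.getLast?_concat] at H
        exact H.mpr hden
  | diaNC a φ ih =>
    intro hfp hfv π₁ π₂ hr hlen
    constructor
    · rintro ⟨_, r, hrT, hrsrc, hrlbl, hlin, hden⟩
      obtain ⟨v, hvT, hvsrc, hvlbl, hsync, hrext⟩ := hR.fwd hr hrT hrsrc
      refine ⟨proc_mem_CSpace 𝔗₂ (hR.runs hr).2, v, hvT, hvsrc, hvlbl.trans hrlbl, ?_, ?_⟩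
      · cases h1 : π₁.getLast? with
        | none => rw [h1] at hlin; exact absurd hlin (by simp [Sys.LinA])
        | some t₁ =>
          rw [h1] at hlin
          obtain ⟨t₂, h2, hI₂⟩ := hsync.1.mp ⟨t₁, h1, hlin.2⟩
          rw [h2]
          exact ⟨(hvsrc.trans (endState_of_getLast 𝔗₂ h2)).symm, hI₂⟩
      · have H := ih hfp hfv (π₁ ++ [r]) (π₂ ++ [v]) hrext (by simp [hlen])
        rw [endState_concat, endState_concat, List.getLast?_concat,
          List.getLast?_concat] at H
        exact H.mp hden
    · rintro ⟨_, v, hvT, hvsrc, hvlbl, hlin, hden⟩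
      obtain ⟨u, huT, husrc, hulbl, hsync, hrext⟩ := hR.bwd hr hvT hvsrc
      refine ⟨proc_mem_CSpace 𝔗₁ (hR.runs hr).1, u, huT, husrc, hulbl.trans hvlbl, ?_, ?_⟩
      · cases h1 : π₂.getLast? with
        | none => rw [h1] at hlin; exact absurd hlin (by simp [Sys.LinA])
        | some t₂ =>
          rw [h1] at hlin
          obtain ⟨t₁, h2, hI₁⟩ := hsync.1.mpr ⟨t₂, h1, hlin.2⟩
          rw [h2]
          exact ⟨(husrc.trans (endState_of_getLast 𝔗₁ h2)).symm, hI₁⟩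
      · have H := ih hfp hfv (π₁ ++ [u]) (π₂ ++ [v]) hrext (by simp [hlen])
        rw [endState_concat, endState_concat, List.getLast?_concat,
          List.getLast?_concat] at H
        exact H.mpr hden
  | mu n φ ih =>
    intro hfp
    exact absurd hfp (by simp [Cmu.FpFree])

end TC

open TC in
/-- Logical soundness of the causal modal mu-calculus: for all
systems `𝔗₁`, `𝔗₂` (image-finite and without auto-concurrency), if
`𝔗₁ ∼_hpb 𝔗₂` then `𝔗₁ ∼_{Cμ} 𝔗₂`; that is, `∼_hpb ⊆ ∼_{Cμ}`. -/
theorem hpb_subset_cmu {S₁ S₂ L : Type} (𝔗₁ : Sys S₁ L) (𝔗₂ : Sys S₂ L)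
    (h₁ : 𝔗₁.IsTSI) (h₂ : 𝔗₂.IsTSI)
    (hf₁ : 𝔗₁.ImageFinite) (hf₂ : 𝔗₂.ImageFinite)
    (ha₁ : 𝔗₁.NoAutoConc) (ha₂ : 𝔗₂.NoAutoConc)
    (hbis : HPBisimilar 𝔗₁ 𝔗₂) :
    CmuEquiv 𝔗₁ 𝔗₂ := by
  obtain ⟨R, hR⟩ := hbis
  intro φ hfp hfv
  have H := hpb_key 𝔗₁ 𝔗₂ R hR φ hfp hfv [] [] hR.base rfl
  simpa [Sys.endState] using H
end

section
/- Let 𝔗₀ and 𝔗₁ be systems with run sets Π₀ and Π₁. If 𝔗₀ ∼_{Cμ} 𝔗₁, then for each run π₀ ∈ Π₀ there exists a run π₁ ∈ Π₁ such that the pair (π₀, π₁) is locally synchronous, and symmetrically for each run of 𝔗₁ there is a locally synchronous run of 𝔗₀. -/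
/-!
Call two processes equivalent when they satisfy the same closed fixpoint-free `Cμ` formulae.
If `P ≡ Q` and `r` is an `a`-step out of `P` that is causal (resp. linearly concurrent) with
respect to the incoming transition of `P`, then some `a`-step of the same kind out of `Q` reaches
a process equivalent to the target of `r`. Otherwise, by image-finiteness, finitely many formulae
separate the target of `r` from every candidate, and `⟨a⟩_c` (resp. `⟨a⟩_{nc}`) of their
conjunction holds at `P` but not at `Q`. Along a run, whether the next transition is independent
of the last one is exactly the choice between the two modalities, so matching a run step by step
yields a locally synchronous run of the other system.
-/

namespace TC

variable {S S₀ S₁ L : Type}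

namespace Sys

variable (𝔗 : Sys S L)

/-- The side condition of `⟨a⟩_c` for `true` and of `⟨a⟩_{nc}` for `false`. -/
def modalRel : Bool → Option (Tr S L) → Tr S L → Prop
  | true => 𝔗.CausA
  | false => 𝔗.LinA

def runProc (π : List (Tr S L)) : S × Option (Tr S L) := (𝔗.endState π, π.getLast?)

variable {𝔗}

theorem mem_CSpace_tgt {t : Tr S L} (ht : t ∈ 𝔗.T) : (t.tgt, some t) ∈ 𝔗.CSpace :=
  ⟨ht, rfl⟩

theorem endState_eq_getD (π : List (Tr S L)) :
    𝔗.endState π = (π.getLast?.map Tr.tgt).getD 𝔗.init := by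
  unfold endState
  cases π.getLast? <;> rfl

theorem isRunFrom_append_singleton {s : S} {π : List (Tr S L)} {u : Tr S L} :
    𝔗.IsRunFrom s (π ++ [u]) ↔
      𝔗.IsRunFrom s π ∧ u ∈ 𝔗.T ∧ u.src = (π.getLast?.map Tr.tgt).getD s := by
  induction π generalizing s with
  | nil => simp [IsRunFrom]
  | cons t π ih =>
    simp only [List.cons_append, IsRunFrom, ih, List.getLast?_cons, and_assoc]
    cases π.getLast? <;> rfl

theorem isRun_append_singleton {π : List (Tr S L)} {u : Tr S L} :
    𝔗.IsRun (π ++ [u]) ↔ 𝔗.IsRun π ∧ u ∈ 𝔗.T ∧ u.src = 𝔗.endState π := by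
  rw [IsRun, IsRun, isRunFrom_append_singleton, endState_eq_getD]

theorem runProc_append_singleton (π : List (Tr S L)) (u : Tr S L) :
    𝔗.runProc (π ++ [u]) = (u.tgt, some u) := by
  rw [runProc, endState_eq_getD, List.getLast?_concat]
  rfl

theorem runProc_mem_CSpace {π : List (Tr S L)} (hπ : 𝔗.IsRun π) : 𝔗.runProc π ∈ 𝔗.CSpace := by
  rcases List.eq_nil_or_concat π with rfl | ⟨π, u, rfl⟩
  · exact (rfl : 𝔗.init = 𝔗.init)
  · rw [List.concat_eq_append] at hπ ⊢
    rw [runProc_append_singleton]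
    exact mem_CSpace_tgt (isRun_append_singleton.1 hπ).2.1

theorem modalRel_getLast?_iff {π : List (Tr S L)} {u : Tr S L} {c : Bool}
    (hu : u.src = 𝔗.endState π) :
    𝔗.modalRel c π.getLast? u ↔ (𝔗.lastIndep π u ↔ c = false) := by
  unfold endState at hu
  unfold lastIndep
  cases h : π.getLast? <;> cases c <;> simp_all [modalRel, CausA, LinA, Caus, Lin]

end Sys

namespace Cmu

def dia : Bool → L → Cmu L → Cmu L
  | true => .diaC
  | false => .diaNC

@[simp]
theorem fpFree_dia {c : Bool} {a : L} {φ : Cmu L} : (dia c a φ).FpFree ↔ φ.FpFree := by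
  cases c <;> rfl

@[simp]
theorem fv_dia {c : Bool} {a : L} {φ : Cmu L} : (dia c a φ).FV = φ.FV := by
  cases c <;> rfl

theorem mem_denot_dia {𝔗 : Sys S L} {V : ℕ → Set (S × Option (Tr S L))} {p : S × Option (Tr S L)}
    {c : Bool} {a : L} {φ : Cmu L} :
    p ∈ denot 𝔗 V (dia c a φ) ↔ p ∈ 𝔗.CSpace ∧ ∃ r ∈ 𝔗.T, r.src = p.1 ∧ r.lbl = a ∧
      𝔗.modalRel c p.2 r ∧ (r.tgt, some r) ∈ denot 𝔗 V φ := by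
  cases c <;> rfl

end Cmu

def CmuEquivAt (𝔗₀ : Sys S₀ L) (𝔗₁ : Sys S₁ L)
    (P : S₀ × Option (Tr S₀ L)) (Q : S₁ × Option (Tr S₁ L)) : Prop :=
  ∀ φ : Cmu L, φ.FpFree → φ.FV = ∅ →
    (P ∈ Cmu.denot 𝔗₀ (fun _ => ∅) φ ↔ Q ∈ Cmu.denot 𝔗₁ (fun _ => ∅) φ)

theorem CmuEquiv.symm {𝔗₀ : Sys S₀ L} {𝔗₁ : Sys S₁ L} (h : CmuEquiv 𝔗₀ 𝔗₁) :
    CmuEquiv 𝔗₁ 𝔗₀ :=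
  fun φ hφ hfv => (h φ hφ hfv).symm

theorem LocSync.symm {𝔗₀ : Sys S₀ L} {𝔗₁ : Sys S₁ L} {π₀ : List (Tr S₀ L)}
    {π₁ : List (Tr S₁ L)} (h : LocSync 𝔗₀ 𝔗₁ π₀ π₁) : LocSync 𝔗₁ 𝔗₀ π₁ π₀ := by
  induction h with
  | nil => exact .nil
  | snoc _ hiff ih => exact ih.snoc hiff.symm

section Separation

variable {𝔗₀ : Sys S₀ L} {𝔗₁ : Sys S₁ L} {P : S₀ × Option (Tr S₀ L)}

theorem exists_separating_of_not_cmuEquivAt {Q : S₁ × Option (Tr S₁ L)} (hP : P ∈ 𝔗₀.CSpace)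
    (h : ¬ CmuEquivAt 𝔗₀ 𝔗₁ P Q) :
    ∃ φ : Cmu L, φ.FpFree ∧ φ.FV = ∅ ∧
      P ∈ Cmu.denot 𝔗₀ (fun _ => ∅) φ ∧ Q ∉ Cmu.denot 𝔗₁ (fun _ => ∅) φ := by
  simp only [CmuEquivAt, not_forall] at h
  obtain ⟨φ, hfp, hfv, hφ⟩ := h
  by_cases hPφ : P ∈ Cmu.denot 𝔗₀ (fun _ => ∅) φ
  · exact ⟨φ, hfp, hfv, hPφ, by tauto⟩
  · exact ⟨.neg φ, hfp, hfv, ⟨hP, hPφ⟩, fun hQ => hQ.2 (by tauto)⟩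

theorem exists_separating_of_finite (hP : P ∈ 𝔗₀.CSpace) {C : Set (S₁ × Option (Tr S₁ L))}
    (hC : C.Finite) (hne : ∀ Q ∈ C, ¬ CmuEquivAt 𝔗₀ 𝔗₁ P Q) :
    ∃ φ : Cmu L, φ.FpFree ∧ φ.FV = ∅ ∧
      P ∈ Cmu.denot 𝔗₀ (fun _ => ∅) φ ∧ ∀ Q ∈ C, Q ∉ Cmu.denot 𝔗₁ (fun _ => ∅) φ := by
  induction C, hC using Set.Finite.induction_on with
  | empty => exact ⟨.tt, trivial, rfl, hP, by simp⟩
  | @insert Q C _ _ ih =>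
    obtain ⟨ψ, hψfp, hψfv, hPψ, hQψ⟩ :=
      exists_separating_of_not_cmuEquivAt hP (hne Q (Set.mem_insert Q C))
    obtain ⟨φ, hφfp, hφfv, hPφ, hCφ⟩ := ih fun Q' hQ' => hne Q' (Set.mem_insert_of_mem Q hQ')
    refine ⟨.and ψ φ, ⟨hψfp, hφfp⟩, by simp [Cmu.FV, hψfv, hφfv], ⟨hPψ, hPφ⟩, ?_⟩
    rintro Q' (rfl | hQ') ⟨hQ'ψ, hQ'φ⟩
    exacts [hQψ hQ'ψ, hCφ Q' hQ' hQ'φ]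

theorem CmuEquivAt.exists_step (hf₁ : 𝔗₁.ImageFinite) {Q : S₁ × Option (Tr S₁ L)}
    (hPQ : CmuEquivAt 𝔗₀ 𝔗₁ P Q) (hP : P ∈ 𝔗₀.CSpace) {c : Bool} {r : Tr S₀ L}
    (hr : r ∈ 𝔗₀.T) (hsrc : r.src = P.1) (hrel : 𝔗₀.modalRel c P.2 r) :
    ∃ v ∈ 𝔗₁.T, v.src = Q.1 ∧ v.lbl = r.lbl ∧ 𝔗₁.modalRel c Q.2 v ∧
      CmuEquivAt 𝔗₀ 𝔗₁ (r.tgt, some r) (v.tgt, some v) := by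
  by_contra! hcon
  set cands := {v | v ∈ 𝔗₁.T ∧ v.src = Q.1 ∧ v.lbl = r.lbl ∧ 𝔗₁.modalRel c Q.2 v}
  have hfin : cands.Finite := (hf₁ Q.1 r.lbl).subset fun v hv => ⟨hv.1, hv.2.1, hv.2.2.1⟩
  obtain ⟨φ, hfp, hfv, hrφ, hcandsφ⟩ := exists_separating_of_finite (Sys.mem_CSpace_tgt hr)
    (hfin.image fun v => (v.tgt, some v))
    (by rintro _ ⟨v, ⟨hv, hvsrc, hvlbl, hvrel⟩, rfl⟩; exact hcon v hv hvsrc hvlbl hvrel)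
  have hQ : Q ∈ Cmu.denot 𝔗₁ (fun _ => ∅) (Cmu.dia c r.lbl φ) :=
    (hPQ _ (by simpa) (by simpa)).1 (Cmu.mem_denot_dia.2 ⟨hP, r, hr, hsrc, rfl, hrel, hrφ⟩)
  obtain ⟨-, v, hv, hvsrc, hvlbl, hvrel, hvφ⟩ := Cmu.mem_denot_dia.1 hQ
  exact hcandsφ _ ⟨v, ⟨hv, hvsrc, hvlbl, hvrel⟩, rfl⟩ hvφ

end Separation

theorem exists_locSync_of_cmuEquiv {𝔗₀ : Sys S₀ L} {𝔗₁ : Sys S₁ L} (hf₁ : 𝔗₁.ImageFinite)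
    (heq : CmuEquiv 𝔗₀ 𝔗₁) {π₀ : List (Tr S₀ L)} (hπ₀ : 𝔗₀.IsRun π₀) :
    ∃ π₁, 𝔗₁.IsRun π₁ ∧ LocSync 𝔗₀ 𝔗₁ π₀ π₁ ∧
      CmuEquivAt 𝔗₀ 𝔗₁ (𝔗₀.runProc π₀) (𝔗₁.runProc π₁) := by
  classical
  induction π₀ using List.reverseRecOn with
  | nil => exact ⟨[], trivial, .nil, heq⟩
  | append_singleton π₀ u ih =>
    obtain ⟨hπ₀, hu, hsrc⟩ := Sys.isRun_append_singleton.1 hπ₀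
    obtain ⟨π₁, hπ₁, hsync, hequiv⟩ := ih hπ₀
    obtain ⟨v, hv, hvsrc, -, hvrel, hvequiv⟩ :=
      hequiv.exists_step hf₁ (Sys.runProc_mem_CSpace hπ₀) (c := !decide (𝔗₀.lastIndep π₀ u))
        hu hsrc ((Sys.modalRel_getLast?_iff hsrc).2 (by simp))
    refine ⟨π₁ ++ [v], Sys.isRun_append_singleton.2 ⟨hπ₁, hv, hvsrc⟩, hsync.snoc ?_, ?_⟩
    · rw [(Sys.modalRel_getLast?_iff hvsrc).1 hvrel]
      simp
    · rwa [Sys.runProc_append_singleton, Sys.runProc_append_singleton]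

end TC

open TC in
theorem cmu_equiv_runs_locally_synchronous_general {S₀ S₁ L : Type}
    (𝔗₀ : Sys S₀ L) (𝔗₁ : Sys S₁ L)
    (hf₀ : 𝔗₀.ImageFinite) (hf₁ : 𝔗₁.ImageFinite)
    (heq : CmuEquiv 𝔗₀ 𝔗₁) :
    (∀ π₀, 𝔗₀.IsRun π₀ → ∃ π₁, 𝔗₁.IsRun π₁ ∧ LocSync 𝔗₀ 𝔗₁ π₀ π₁) ∧
    (∀ π₁, 𝔗₁.IsRun π₁ → ∃ π₀, 𝔗₀.IsRun π₀ ∧ LocSync 𝔗₀ 𝔗₁ π₀ π₁) :=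
  ⟨fun _ hπ₀ => (exists_locSync_of_cmuEquiv hf₁ heq hπ₀).imp fun _ h => ⟨h.1, h.2.1⟩,
    fun _ hπ₁ => (exists_locSync_of_cmuEquiv hf₀ heq.symm hπ₁).imp fun _ h => ⟨h.1, h.2.1.symm⟩⟩

open TC in
/-- If `𝔗₀ ∼_{Cμ} 𝔗₁`, then for each run `π₀` of `𝔗₀` there is a
run `π₁` of `𝔗₁` such that `(π₀, π₁)` is locally synchronous, and symmetrically
for each run of `𝔗₁` there is a locally synchronous run of `𝔗₀`. -/
theorem cmu_equiv_runs_locally_synchronous {S₀ S₁ L : Type}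
    (𝔗₀ : Sys S₀ L) (𝔗₁ : Sys S₁ L)
    (h₀ : 𝔗₀.IsTSI) (h₁ : 𝔗₁.IsTSI)
    (hf₀ : 𝔗₀.ImageFinite) (hf₁ : 𝔗₁.ImageFinite)
    (ha₀ : 𝔗₀.NoAutoConc) (ha₁ : 𝔗₁.NoAutoConc)
    (heq : CmuEquiv 𝔗₀ 𝔗₁) :
    (∀ π₀, 𝔗₀.IsRun π₀ → ∃ π₁, 𝔗₁.IsRun π₁ ∧ LocSync 𝔗₀ 𝔗₁ π₀ π₁) ∧
    (∀ π₁, 𝔗₁.IsRun π₁ → ∃ π₀, 𝔗₀.IsRun π₀ ∧ LocSync 𝔗₀ 𝔗₁ π₀ π₁) :=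
  cmu_equiv_runs_locally_synchronous_general 𝔗₀ 𝔗₁ hf₀ hf₁ heq
end
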